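/- arXiv:2505.07183 — 8 statements merged into one kernel-verified Lean document; each statement's English description precedes it below -/
import Mathlib

section
/- Define the grid points x_k = -b + 2bk/N for 0 ≤ k < N. If f: ℝ → ℝ is odd (f(-x) = -f(x)) and 2b-periodic (f(x+2b) = f(x)), and the coefficients a_j for 1 ≤ j ≤ M-1 are defined by a_j = (2/N) Σ_{k=1}^{N-1} (-1)^j f(x_k) sin(2πjk/N), then the trigonometric polynomial f_M(x) = Σ_{j=1}^{M-1} a_j sin(jπx/b) interpolates f at all grid points: f_M(x_k) = f(x_k) for every 0 ≤ k < N. -/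
/-!
At a grid point, `sin (j π x_l / b) = (-1)^j sin (π j l / M)`, so the sign in `a_j` cancels and
`f_M(x_l) = M⁻¹ ∑_k f(x_k) ∑_j sin (π j k / M) sin (π j l / M)`. The inner sums are the discrete
orthogonality relations of the sine transform: they equal `M / 2 · (δ(k ≡ l) - δ(k ≡ -l))`
modulo `2M`, because product-to-sum reduces them to cosine sums `∑_{j<M} cos (π j m / M)`,
which telescope after multiplication by `sin (π m / 2M)`. Oddness gives `f(x_{2M-k}) = -f(x_k)` and, together
with periodicity, `f(x_0) = f(-b) = 0`; hence both deltas pick out `f(x_l)`.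
-/

open Finset Real

theorem two_mul_sin_mul_sum_range_cos (x : ℝ) (n : ℕ) :
    2 * sin x * ∑ j ∈ range n, cos (2 * j * x) = sin ((2 * n - 1) * x) + sin x := by
  have hstep : ∀ j : ℕ, 2 * sin x * cos (2 * j * x)
      = sin ((2 * (j + 1 : ℕ) - 1) * x) - sin ((2 * j - 1) * x) := by
    intro j
    rw [sin_sub_sin]
    push_cast
    ring_nf
  rw [mul_sum, sum_congr rfl fun j _ => hstep j,
    sum_range_sub (fun j : ℕ => sin ((2 * j - 1) * x))]
  simp [sub_eq_add_neg, ← sin_neg]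

theorem two_mul_sum_range_cos_pi_mul_div (M : ℕ) (hM : M ≠ 0) (m : ℤ) :
    2 * ∑ j ∈ range M, cos (π * j * m / M)
      = (if (2 * M : ℤ) ∣ m then 2 * (M : ℝ) else 0) + 1 - cos (π * m) := by
  have hM' : (M : ℝ) ≠ 0 := Nat.cast_ne_zero.mpr hM
  split_ifs with hdvd
  · obtain ⟨t, rfl⟩ := hdvd
    have hone : ∀ j : ℕ, cos (π * j * ((2 * M * t : ℤ) : ℝ) / M) = 1 := by
      intro j
      rw [show π * j * ((2 * M * t : ℤ) : ℝ) / M = ((j * t : ℤ) : ℝ) * (2 * π) by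
        push_cast; field_simp]
      exact cos_int_mul_two_pi _
    have hpi : cos (π * ((2 * M * t : ℤ) : ℝ)) = 1 := by
      rw [show π * ((2 * M * t : ℤ) : ℝ) = ((M * t : ℤ) : ℝ) * (2 * π) by push_cast; ring]
      exact cos_int_mul_two_pi _
    rw [sum_congr rfl fun j _ => hone j, hpi]
    simp
  · -- `sin x ≠ 0` precisely because `2M ∤ m`, so the telescoped identity can be divided by it.
    set x := π * m / (2 * M) with hx
    have hsin : sin x ≠ 0 := by
      rw [Ne, sin_eq_zero_iff]
      rintro ⟨n, hn⟩
      refine hdvd ⟨n, ?_⟩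
      rw [hx] at hn
      field_simp at hn
      exact_mod_cast (by linear_combination -hn : (m : ℝ) = 2 * M * n)
    have htel := two_mul_sin_mul_sum_range_cos x M
    have harg : (2 * M - 1) * x = m * π - x := by rw [hx]; field_simp
    rw [harg, sin_sub, sin_int_mul_pi] at htel
    have hcos : ∀ j : ℕ, cos (π * j * m / M) = cos (2 * j * x) := by
      intro j; rw [hx]; congr 1; field_simp
    simp only [hcos, mul_comm π (m : ℝ)]
    apply mul_left_cancel₀ hsin
    linear_combination htel

def oddDelta (N : ℕ) (k l : ℤ) : ℝ :=
  (if (N : ℤ) ∣ k - l then 1 else 0) - (if (N : ℤ) ∣ k + l then 1 else 0)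

theorem sum_Ico_sin_mul_sin_pi_mul_div (M : ℕ) (hM : M ≠ 0) (k l : ℤ) :
    ∑ j ∈ Ico 1 M, sin (π * j * k / M) * sin (π * j * l / M)
      = M / 2 * oddDelta (2 * M) k l := by
  have hrange : ∑ j ∈ Ico 1 M, sin (π * j * k / M) * sin (π * j * l / M)
      = ∑ j ∈ range M, sin (π * j * k / M) * sin (π * j * l / M) := by
    rw [range_eq_Ico, sum_eq_sum_Ico_succ_bot (Nat.pos_of_ne_zero hM)]
    simp
  have hprod : ∀ j : ℕ, sin (π * j * k / M) * sin (π * j * l / M)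
      = (cos (π * j * ((k - l : ℤ) : ℝ) / M) - cos (π * j * ((k + l : ℤ) : ℝ) / M)) / 2 := by
    intro j
    rw [show π * j * ((k - l : ℤ) : ℝ) / M = π * j * k / M - π * j * l / M by push_cast; ring,
      show π * j * ((k + l : ℤ) : ℝ) / M = π * j * k / M + π * j * l / M by push_cast; ring,
      cos_sub, cos_add]
    ring
  have hcos : cos (π * ((k + l : ℤ) : ℝ)) = cos (π * ((k - l : ℤ) : ℝ)) := by
    rw [← cos_add_int_mul_two_pi (π * ((k - l : ℤ) : ℝ)) l]
    congr 1
    push_cast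
    ring
  have hsub := two_mul_sum_range_cos_pi_mul_div M hM (k - l)
  have hadd := two_mul_sum_range_cos_pi_mul_div M hM (k + l)
  rw [hrange, sum_congr rfl fun j _ => hprod j, ← sum_div, sum_sub_distrib]
  simp only [oddDelta, Nat.cast_mul, Nat.cast_ofNat]
  split_ifs at hsub hadd ⊢ <;> linear_combination (hsub - hadd + hcos) / 4

theorem sum_Ico_mul_oddDelta {N l : ℕ} (hl : l < N) (g : ℕ → ℝ) (h0 : g 0 = 0)
    (hanti : ∀ k ≤ N, g (N - k) = -g k) :
    ∑ k ∈ Ico 1 N, g k * oddDelta N k l = 2 * g l := by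
  have hreflect := sum_Ico_reflect
    (fun k => g k * if (N : ℤ) ∣ (k : ℤ) + l then (1 : ℝ) else 0) 1 (Nat.le_succ N)
  have hfold : ∑ k ∈ Ico 1 N, g k * (if (N : ℤ) ∣ (k : ℤ) + l then (1 : ℝ) else 0)
      = -∑ k ∈ Ico 1 N, g k * if (N : ℤ) ∣ (k : ℤ) - l then (1 : ℝ) else 0 := by
    rw [Nat.add_sub_cancel_left, Nat.add_sub_cancel] at hreflect
    rw [← hreflect, ← sum_neg_distrib]
    refine sum_congr rfl fun k hk => ?_
    have hkN : k ≤ N := (mem_Ico.mp hk).2.le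
    have hdvd : (N : ℤ) ∣ ((N - k : ℕ) : ℤ) + l ↔ (N : ℤ) ∣ (k : ℤ) - l := by
      rw [Nat.cast_sub hkN, show (N : ℤ) - k + l = N - (k - l) by ring, dvd_sub_self_left]
    simp only [hanti k hkN, hdvd, neg_mul]
  have hpick : ∑ k ∈ range N, g k * (if (N : ℤ) ∣ (k : ℤ) - l then (1 : ℝ) else 0) = g l := by
    rw [sum_eq_single_of_mem l (mem_range.mpr hl)]
    · simp
    · intro k hk hkl
      rw [if_neg fun h => hkl ((Nat.modEq_iff_dvd.mpr h).eq_of_lt_of_lt hl (mem_range.mp hk)).symm,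
        mul_zero]
  rw [range_eq_Ico, sum_eq_sum_Ico_succ_bot (Nat.zero_lt_of_lt hl), h0, zero_mul, zero_add]
    at hpick
  simp only [oddDelta, mul_sub, sum_sub_distrib, hfold, hpick]
  ring

theorem sin_nat_mul_pi_mul_grid_div (j l M : ℕ) (hM : M ≠ 0) {b : ℝ} (hb : b ≠ 0) :
    sin (j * π * (-b + 2 * b * l / (2 * M)) / b) = (-1) ^ j * sin (π * j * l / M) := by
  have hM' : (M : ℝ) ≠ 0 := Nat.cast_ne_zero.mpr hM
  rw [← sin_sub_nat_mul_pi]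
  congr 1
  field_simp
  ring

theorem apply_neg_eq_zero_of_odd_of_periodic {f : ℝ → ℝ} {b : ℝ} (hodd : ∀ x, f (-x) = -f x)
    (hper : ∀ x, f (x + 2 * b) = f x) : f (-b) = 0 := by
  have h := hper (-b)
  rw [show -b + 2 * b = b by ring] at h
  linarith [hodd b]

/-- Trigonometric interpolation of an odd `2b`-periodic function at
the grid points `x_k = -b + 2bk/N`, with `N = 2M` and coefficients computed by
the discrete sine transform. -/
theorem stmt_0 (M : ℕ) (hM : 2 ≤ M) (b : ℝ) (hb : 0 < b)
    (f : ℝ → ℝ) (hodd : ∀ x : ℝ, f (-x) = -f x)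
    (hper : ∀ x : ℝ, f (x + 2 * b) = f x)
    (a : ℕ → ℝ)
    (ha : ∀ j : ℕ, 1 ≤ j → j ≤ M - 1 →
      a j = (2 / (2 * (M : ℝ))) * ∑ k ∈ Finset.Ico 1 (2 * M),
        (-1 : ℝ) ^ j * f (-b + 2 * b * (k : ℝ) / (2 * (M : ℝ))) *
          Real.sin (2 * Real.pi * (j : ℝ) * (k : ℝ) / (2 * (M : ℝ)))) :
    ∀ k : ℕ, k < 2 * M →
      ∑ j ∈ Finset.Ico 1 M,
          a j * Real.sin ((j : ℝ) * Real.pi * (-b + 2 * b * (k : ℝ) / (2 * (M : ℝ))) / b)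
        = f (-b + 2 * b * (k : ℝ) / (2 * (M : ℝ))) := by
  intro l hl
  have hM0 : M ≠ 0 := by omega
  have hM' : (M : ℝ) ≠ 0 := Nat.cast_ne_zero.mpr hM0
  set g : ℕ → ℝ := fun k => f (-b + 2 * b * k / (2 * M)) with hg
  have hg0 : g 0 = 0 := by
    simpa [hg] using apply_neg_eq_zero_of_odd_of_periodic hodd hper
  have hgodd : ∀ k ≤ 2 * M, g (2 * M - k) = -g k := by
    intro k hk
    simp only [hg, ← hodd]
    congr 1
    push_cast [Nat.cast_sub hk]
    field_simp
    ring
  have hterm : ∀ j ∈ Ico 1 M, a j * sin (j * π * (-b + 2 * b * l / (2 * M)) / b)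
      = (M : ℝ)⁻¹ * ∑ k ∈ Ico 1 (2 * M), g k * (sin (π * j * k / M) * sin (π * j * l / M)) := by
    intro j hj
    have hsq : (-1 : ℝ) ^ j * (-1) ^ j = 1 := by rw [← mul_pow, neg_one_mul, neg_neg, one_pow]
    rw [ha j (mem_Ico.mp hj).1 (by have := (mem_Ico.mp hj).2; omega),
      sin_nat_mul_pi_mul_grid_div j l M hM0 hb.ne', show 2 / (2 * (M : ℝ)) = (M : ℝ)⁻¹ by
        field_simp, mul_assoc, sum_mul]
    refine congrArg _ (sum_congr rfl fun k _ => ?_)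
    rw [show 2 * π * j * k / (2 * M) = π * j * k / M by field_simp]
    linear_combination (g k * sin (π * j * k / M) * sin (π * j * l / M)) * hsq
  calc ∑ j ∈ Ico 1 M, a j * sin (j * π * (-b + 2 * b * l / (2 * M)) / b)
      = (M : ℝ)⁻¹ * ∑ k ∈ Ico 1 (2 * M), g k *
          ∑ j ∈ Ico 1 M, sin (π * j * k / M) * sin (π * j * l / M) := by
        rw [sum_congr rfl hterm, ← mul_sum, sum_comm]
        simp only [mul_sum]
    _ = (M : ℝ)⁻¹ * ∑ k ∈ Ico 1 (2 * M), g k * (M / 2 * oddDelta (2 * M) k l) := by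
        have horth (k : ℕ) := sum_Ico_sin_mul_sin_pi_mul_div M hM0 k l
        simp only [Int.cast_natCast] at horth
        simp only [horth]
    _ = g l := by
        simp_rw [mul_left_comm (g _), ← mul_sum, sum_Ico_mul_oddDelta hl g hg0 hgodd]
        field_simp
end

section
/- For every integer n ≥ 1 and every integer k with 0 < k < 2n, the identity Σ_{j=0}^{n-1} j·sin(πjk/n) = (-1)^{k+1}·(n/2)·cot(πk/(2n)) holds (for k = n both sides equal 0, using cot(π/2) = 0). -/
open Complex Finset

lemma aux_sum (z : ℂ) (n : ℕ) :
    (1 - z) ^ 2 * ∑ j ∈ Finset.range n, (j : ℂ) * z ^ j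
      = (n : ℂ) * z ^ (n + 1) - z ^ (n + 1) + z - (n : ℂ) * z ^ n := by
  induction n with
  | zero => simp
  | succ m ih =>
    rw [Finset.sum_range_succ, mul_add, ih]
    push_cast
    ring

/-- For integers `n ≥ 1` and `0 < k < 2n`,
`∑_{j=0}^{n-1} j sin(πjk/n) = (-1)^{k+1} (n/2) cot(πk/(2n))`
(for `k = n` both sides vanish since `cot(π/2) = 0`). -/
theorem stmt_3 (n : ℕ) (hn : 1 ≤ n) (k : ℕ) (hk0 : 0 < k) (hk : k < 2 * n) :
    ∑ j ∈ Finset.range n, (j : ℝ) * Real.sin (Real.pi * (j : ℝ) * (k : ℝ) / (n : ℝ))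
      = (-1 : ℝ) ^ (k + 1) * ((n : ℝ) / 2) * Real.cot (Real.pi * (k : ℝ) / (2 * (n : ℝ))) := by
  have hn0 : (n : ℝ) ≠ 0 := by positivity
  have hk2n : (k : ℝ) < 2 * n := by exact_mod_cast hk
  set φ : ℝ := Real.pi * k / (2 * n) with hφ
  have hφ0 : 0 < φ := by
    rw [hφ]
    have : (0:ℝ) < (k:ℝ) := by exact_mod_cast hk0
    positivity
  have hφπ : φ < Real.pi := by
    rw [hφ, div_lt_iff₀ (by positivity)]
    nlinarith [Real.pi_pos]
  set s : ℝ := Real.sin φ with hsdef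
  set c : ℝ := Real.cos φ with hcdef
  have hs : 0 < s := Real.sin_pos_of_pos_of_lt_pi hφ0 hφπ
  have hsne : s ≠ 0 := ne_of_gt hs
  have hscC : (s : ℂ) ^ 2 + (c : ℂ) ^ 2 = 1 := by
    norm_cast
    exact Real.sin_sq_add_cos_sq φ
  set z : ℂ := Complex.exp (↑(2 * φ) * Complex.I) with hzdef
  have hz : z = ((c : ℂ) + (s : ℂ) * Complex.I) ^ 2 := by
    rw [hzdef, show ((2 * φ : ℝ) : ℂ) * Complex.I = ((2 : ℕ) : ℂ) * ((φ : ℂ) * Complex.I) by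
      push_cast; ring, Complex.exp_nat_mul, Complex.exp_mul_I,
      ← Complex.ofReal_cos, ← Complex.ofReal_sin]
  have h1z : (1 : ℂ) - z = 2 * (s : ℂ) * ((s : ℂ) - (c : ℂ) * Complex.I) := by
    rw [hz]
    linear_combination -hscC - (s:ℂ)^2 * Complex.I_sq
  have h1z_ne : (1 : ℂ) - z ≠ 0 := by
    rw [h1z]
    refine mul_ne_zero (mul_ne_zero two_ne_zero ?_) ?_
    · exact_mod_cast hsne
    · intro h
      have := congrArg Complex.re h
      simp at this
      exact hsne this
  have h2ne : ((1 : ℂ) - z) ^ 2 ≠ 0 := pow_ne_zero _ h1z_ne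
  set S : ℂ := ∑ j ∈ Finset.range n, (j : ℂ) * z ^ j with hSdef
  have hA := aux_sum z n
  have hangC : (n : ℂ) * (2 * (φ:ℂ)) = (Real.pi : ℂ) * (k : ℂ) := by
    have hang : (n : ℝ) * (2 * φ) = Real.pi * k := by
      rw [hφ]; field_simp
    exact_mod_cast congrArg (Complex.ofReal) hang
  have hzn : z ^ n = (-1 : ℂ) ^ k := by
    rw [hzdef, ← Complex.exp_nat_mul, ← Complex.exp_pi_mul_I, ← Complex.exp_nat_mul]
    congr 1
    push_cast
    linear_combination Complex.I * hangC
  have hterm : ∀ j : ℕ, ((j : ℂ) * z ^ j).im = (j : ℝ) * Real.sin (2 * φ * j) := by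
    intro j
    rw [hzdef, ← Complex.exp_nat_mul,
      show (j : ℂ) * (↑(2 * φ) * Complex.I) = ((2 * φ * j : ℝ) : ℂ) * Complex.I by
        push_cast; ring]
    simp only [Complex.mul_im, Complex.natCast_im, Complex.natCast_re,
      Complex.exp_ofReal_mul_I_im, zero_mul, add_zero, mul_zero]
  have hLHS : ∑ j ∈ Finset.range n, (j : ℝ) * Real.sin (Real.pi * (j : ℝ) * (k : ℝ) / (n : ℝ))
      = S.im := by
    rw [hSdef, Complex.im_sum]
    refine Finset.sum_congr rfl fun j _ => ?_
    rw [hterm j]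
    congr 2
    rw [hφ]; field_simp
  rw [hLHS, Real.cot_eq_cos_div_sin, ← hsdef, ← hcdef]
  rcases Nat.even_or_odd k with hke | hko
  · -- even case
    have hzn1 : z ^ n = 1 := by rw [hzn, hke.neg_one_pow]
    rw [pow_succ z n, hzn1] at hA
    have hSeq : ((1:ℂ) - z) ^ 2 * S = -(n : ℂ) * (1 - z) := by linear_combination hA
    rw [h1z] at hSeq
    have hSw : S * (s : ℂ) = ((-(n : ℝ) * s / 2 : ℝ) : ℂ) + ((-(n : ℝ) * c / 2 : ℝ) : ℂ) * Complex.I := by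
      apply mul_left_cancel₀ h2ne
      rw [h1z]
      push_cast
      linear_combination (s : ℂ) * hSeq
        + (2*(n:ℂ)*(s:ℂ)^2*(c:ℂ)^3*Complex.I - 2*(n:ℂ)*(s:ℂ)^3*(c:ℂ)^2) * Complex.I_sq
        + (-2*(n:ℂ)*(s:ℂ)^2*(c:ℂ)*Complex.I + 2*(n:ℂ)*(s:ℂ)^3) * hscC
    have himS : S.im * s = -(n : ℝ) * c / 2 := by
      have := congrArg Complex.im hSw
      simpa [Complex.mul_im] using this
    have hpow : ((-1 : ℝ)) ^ (k + 1) = -1 := (hke.add_one).neg_one_pow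
    rw [hpow]
    field_simp
    linear_combination 2 * himS
  · -- odd case
    have hzn1 : z ^ n = -1 := by rw [hzn, hko.neg_one_pow]
    rw [pow_succ z n, hzn1] at hA
    have hSeq : ((1:ℂ) - z) ^ 2 * S = (2 - (n : ℂ)) * z + (n : ℂ) := by linear_combination hA
    rw [h1z, hz] at hSeq
    have hSw : S * (s : ℂ) ^ 2
        = (((n : ℝ) * s ^ 2 / 2 - 1 / 2 : ℝ) : ℂ) + (((n : ℝ) * c * s / 2 : ℝ) : ℂ) * Complex.I := by
      apply mul_left_cancel₀ h2ne
      rw [h1z]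
      push_cast
      linear_combination (s : ℂ)^2 * hSeq
        + (2*(s:ℂ)^2*(c:ℂ)^2 - 2*(n:ℂ)*(s:ℂ)^3*(c:ℂ)^3*Complex.I + 2*(s:ℂ)^4
            - (n:ℂ)*(s:ℂ)^4 + 2*(n:ℂ)*(s:ℂ)^4*(c:ℂ)^2) * Complex.I_sq
        + (-(n:ℂ)*(s:ℂ)^2 + 2*(n:ℂ)*(s:ℂ)^3*(c:ℂ)*Complex.I - 2*(n:ℂ)*(s:ℂ)^4) * hscC
    have himS : S.im * s ^ 2 = (n : ℝ) * c * s / 2 := by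
      have := congrArg Complex.im hSw
      simpa [Complex.mul_im, sq] using this
    have himS' : S.im * s = (n : ℝ) * c / 2 :=
      mul_right_cancel₀ hsne (by linear_combination himS)
    have hpow : ((-1 : ℝ)) ^ (k + 1) = 1 := (hko.add_one).neg_one_pow
    rw [hpow]
    field_simp
    linear_combination 2 * himS'
end

section
/- Let a_0, a_1 ∈ ℝ, B = (b_1,…,b_{M-1})ᵀ ∈ ℝ^{M-1}, and suppose the vector V̂ = (v_1,…,v_{M-1})ᵀ ∈ ℝ^{M-1} satisfies v_k = a_1 + a_0·(b/M)·k - (b/π)² Σ_{j=1}^{M-1} (b_j/j²) sin(πjk/M) for all 1 ≤ k ≤ M-1. Then the coefficients are recovered by b_j = j² Σ_{k=1}^{M-1} sin(πjk/M)·( (2a_1π²)/(Mb²) + (2a_0π² k)/(bM²) - (2π²/(Mb²))·v_k ) for all 1 ≤ j ≤ M-1. -/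
/-!
The vectors `(sin (π j k / M))_{1 ≤ k < M}`, `1 ≤ j < M`, are orthogonal with squared norm
`M / 2` (the discrete sine transform is its own inverse up to the factor `2 / M`). The
orthogonality reduces, by the product-to-sum formula, to the closed form
`∑_{k < M} cos (π n k / M) = (1 - cos (π n)) / 2` for `0 < n < 2M`.
Solving the hypothesis for `(b/π)² ∑_i (B i / i²) sin (π i k / M)` and applying the inverse
transform recovers `B j / j²`.
-/

open Real Finset

lemma sum_range_cos_mul_of_sin_eq_zero (M : ℕ) {a : ℝ} (hMa : sin (M * a) = 0)
    (ha : sin (a / 2) ≠ 0) :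
    ∑ k ∈ range M, cos (a * k) = (1 - cos (M * a)) / 2 := by
  apply mul_left_cancel₀ ha
  have h := sin_mul_sum_cos M a 0
  simp only [add_zero] at h
  rw [h]
  obtain ⟨x, hx⟩ : ∃ x, M * a = 2 * x := ⟨M * a / 2, by ring⟩
  rw [hx, sin_two_mul] at hMa
  rw [show (M - 1 : ℝ) * a / 2 = x - a / 2 by linarith, show M * a / 2 = x by linarith, hx,
    cos_sub, cos_two_mul, ← sin_sq_add_cos_sq x]
  linear_combination cos (a / 2) / 2 * hMa

lemma sum_range_cos_pi_mul_div {M n : ℕ} (hn : 0 < n) (hnM : n < 2 * M) :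
    ∑ k ∈ range M, cos (π * n * k / M) = (1 - cos (π * n)) / 2 := by
  have hM : (0 : ℝ) < M := by exact_mod_cast (by omega : 0 < M)
  have hn' : (0 : ℝ) < n := by exact_mod_cast hn
  have hnM' : (n : ℝ) < 2 * M := by exact_mod_cast hnM
  have key := sum_range_cos_mul_of_sin_eq_zero M (a := π * n / M)
    (by rw [mul_div_cancel₀ _ hM.ne', mul_comm]; exact sin_nat_mul_pi n)
    (sin_pos_of_pos_of_lt_pi (by positivity) (by
      rw [div_div, div_lt_iff₀ (by positivity)]; nlinarith [pi_pos])).ne'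
  rw [mul_div_cancel₀ _ hM.ne'] at key
  rw [← key]
  exact sum_congr rfl fun k _ => by ring_nf

lemma sum_range_sin_mul_sin_of_lt {M i j : ℕ} (hij : i < j) (hj : j < M) :
    ∑ k ∈ range M, sin (π * i * k / M) * sin (π * j * k / M) = 0 := by
  have hprod : ∀ k : ℕ, sin (π * i * k / M) * sin (π * j * k / M) =
      (cos (π * (j - i : ℕ) * k / M) - cos (π * (j + i : ℕ) * k / M)) / 2 := by
    intro k
    rw [Nat.cast_sub hij.le, Nat.cast_add,
      show π * (j - i : ℝ) * k / M = π * j * k / M - π * i * k / M by ring,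
      show π * (j + i : ℝ) * k / M = π * j * k / M + π * i * k / M by ring, cos_sub, cos_add]
    ring
  have hcos : cos (π * (j + i : ℕ)) = cos (π * (j - i : ℕ)) := by
    rw [Nat.cast_sub hij.le, ← cos_add_nat_mul_two_pi (π * (j - i : ℝ)) i]
    push_cast
    ring_nf
  rw [sum_congr rfl fun k _ => hprod k, ← sum_div, sum_sub_distrib,
    sum_range_cos_pi_mul_div (by omega) (by omega), sum_range_cos_pi_mul_div (by omega) (by omega),
    hcos, sub_self, zero_div]

lemma sum_range_sin_sq {M i : ℕ} (hi : 0 < i) (hiM : i < M) :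
    ∑ k ∈ range M, sin (π * i * k / M) * sin (π * i * k / M) = M / 2 := by
  have hprod : ∀ k : ℕ, sin (π * i * k / M) * sin (π * i * k / M) =
      (1 - cos (π * (2 * i : ℕ) * k / M)) / 2 := by
    intro k
    rw [show π * (2 * i : ℕ) * k / M = 2 * (π * i * k / M) by push_cast; ring, cos_two_mul,
      ← sin_sq_add_cos_sq (π * i * k / M)]
    ring
  have hcos : cos (π * (2 * i : ℕ)) = 1 := by
    rw [← cos_nat_mul_two_pi i]
    push_cast
    ring_nf
  rw [sum_congr rfl fun k _ => hprod k, ← sum_div, sum_sub_distrib,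
    sum_range_cos_pi_mul_div (by omega) (by omega), hcos]
  simp

lemma sum_Ico_sin_mul_sin {M i j : ℕ} (hi : i ∈ Ico 1 M) (hj : j ∈ Ico 1 M) :
    ∑ k ∈ Ico 1 M, sin (π * i * k / M) * sin (π * j * k / M) =
      if i = j then (M : ℝ) / 2 else 0 := by
  rw [mem_Ico] at hi hj
  have hrange := sum_range_eq_add_Ico (fun k : ℕ => sin (π * i * k / M) * sin (π * j * k / M))
    (by omega : 0 < M)
  simp only [Nat.cast_zero, mul_zero, zero_div, sin_zero, zero_add] at hrange
  rw [← hrange]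
  rcases lt_trichotomy i j with hij | rfl | hij
  · rw [if_neg hij.ne, sum_range_sin_mul_sin_of_lt hij hj.2]
  · rw [if_pos rfl, sum_range_sin_sq (by omega) hi.2]
  · simp_rw [mul_comm (sin (π * i * _ / M))]
    rw [if_neg hij.ne', sum_range_sin_mul_sin_of_lt hij hi.2]

lemma sum_Ico_sin_mul_sum_Ico_sin {M j : ℕ} (hj : j ∈ Ico 1 M) (c : ℕ → ℝ) :
    ∑ k ∈ Ico 1 M, sin (π * j * k / M) * ∑ i ∈ Ico 1 M, c i * sin (π * i * k / M) =
      M / 2 * c j := by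
  calc ∑ k ∈ Ico 1 M, sin (π * j * k / M) * ∑ i ∈ Ico 1 M, c i * sin (π * i * k / M)
      = ∑ i ∈ Ico 1 M, c i * ∑ k ∈ Ico 1 M, sin (π * i * k / M) * sin (π * j * k / M) := by
        simp_rw [mul_sum]
        rw [sum_comm]
        exact sum_congr rfl fun i _ => sum_congr rfl fun k _ => by ring
    _ = ∑ i ∈ Ico 1 M, if i = j then M / 2 * c i else 0 :=
        sum_congr rfl fun i hi => by rw [sum_Ico_sin_mul_sin hi hj]; split_ifs <;> ring
    _ = M / 2 * c j := by rw [sum_ite_eq' _ _ _, if_pos hj]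

theorem stmt_5_general (M : ℕ) (b : ℝ) (hb : 0 < b)
    (a₀ a₁ : ℝ) (B v : ℕ → ℝ)
    (hv : ∀ k : ℕ, 1 ≤ k → k ≤ M - 1 →
      v k = a₁ + a₀ * (b / (M : ℝ)) * (k : ℝ)
        - (b / Real.pi) ^ 2 * ∑ j ∈ Finset.Ico 1 M,
            (B j / (j : ℝ) ^ 2) * Real.sin (Real.pi * (j : ℝ) * (k : ℝ) / (M : ℝ))) :
    ∀ j : ℕ, 1 ≤ j → j ≤ M - 1 →
      B j = (j : ℝ) ^ 2 * ∑ k ∈ Finset.Ico 1 M,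
        Real.sin (Real.pi * (j : ℝ) * (k : ℝ) / (M : ℝ)) *
          ((2 * a₁ * Real.pi ^ 2) / ((M : ℝ) * b ^ 2)
            + (2 * a₀ * Real.pi ^ 2 * (k : ℝ)) / (b * (M : ℝ) ^ 2)
            - (2 * Real.pi ^ 2 / ((M : ℝ) * b ^ 2)) * v k) := by
  intro j hj1 hj2
  have hj : j ∈ Ico 1 M := mem_Ico.2 ⟨hj1, by omega⟩
  have hM0 : (M : ℝ) ≠ 0 := by norm_cast; omega
  have hterm : ∀ k ∈ Ico 1 M,
      sin (π * j * k / M) * ((2 * a₁ * π ^ 2) / (M * b ^ 2) + (2 * a₀ * π ^ 2 * k) / (b * M ^ 2)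
          - (2 * π ^ 2 / (M * b ^ 2)) * v k) =
        2 / M * (sin (π * j * k / M) * ∑ i ∈ Ico 1 M, B i / i ^ 2 * sin (π * i * k / M)) := by
    intro k hk
    rw [mem_Ico] at hk
    rw [hv k hk.1 (by omega)]
    field_simp
    ring
  rw [sum_congr rfl hterm, ← mul_sum, sum_Ico_sin_mul_sum_Ico_sin hj]
  have hj0 : (j : ℝ) ≠ 0 := by norm_cast; omega
  field_simp

/-- Recovery of the sine coefficients `b_j` from the grid values
`v_k = a₁ + a₀(b/M)k - (b/π)² ∑_{j=1}^{M-1} (b_j/j²) sin(πjk/M)`. -/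
theorem stmt_5 (M : ℕ) (hM : 2 ≤ M) (b : ℝ) (hb : 0 < b)
    (a₀ a₁ : ℝ) (B v : ℕ → ℝ)
    (hv : ∀ k : ℕ, 1 ≤ k → k ≤ M - 1 →
      v k = a₁ + a₀ * (b / (M : ℝ)) * (k : ℝ)
        - (b / Real.pi) ^ 2 * ∑ j ∈ Finset.Ico 1 M,
            (B j / (j : ℝ) ^ 2) * Real.sin (Real.pi * (j : ℝ) * (k : ℝ) / (M : ℝ))) :
    ∀ j : ℕ, 1 ≤ j → j ≤ M - 1 →
      B j = (j : ℝ) ^ 2 * ∑ k ∈ Finset.Ico 1 M,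
        Real.sin (Real.pi * (j : ℝ) * (k : ℝ) / (M : ℝ)) *
          ((2 * a₁ * Real.pi ^ 2) / ((M : ℝ) * b ^ 2)
            + (2 * a₀ * Real.pi ^ 2 * (k : ℝ)) / (b * (M : ℝ) ^ 2)
            - (2 * Real.pi ^ 2 / ((M : ℝ) * b ^ 2)) * v k) :=
  stmt_5_general M b hb a₀ a₁ B v hv
end

section
/- With the above construction and N = 2M, the derivative of ṽ at the left endpoint satisfies the closed form ṽ'(0) = v_0·( (π/(bM)) Σ_{i=1}^{M-1} (-1)^{i+1} i·cot(iπ/N) - (π/b) Σ_{j=1}^{M-1} (-1)^{j+1} cot(jπ/N) - 1/b ) + v_M·( 1/b - (π/(bM)) Σ_{i=1}^{M-1} (-1)^{i+1} i·cot(iπ/N) ) + (π/b) Σ_{i=1}^{M-1} (-1)^{i+1} v_i·cot(iπ/N). -/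
/-!
Differentiating termwise, `ṽ'(0) = a₀ - (b/π) ∑ₖ cₖ ∑ⱼ j sin (π j k / M)`, where `cₖ` is the
bracket in the definition of `b_j`. Multiplying `∑_{j<n} j sin (jθ)` by
`4 sin² (θ/2) = 2 (1 - cos θ)` telescopes to `n sin ((n-1)θ) - (n-1) sin (nθ)`; at `θ = kπ/M`
the second term vanishes and the first is `±M sin θ`, so the inner sum is
`(M/2) (-1)^(k+1) cot (kπ/2M)`. Expanding `cₖ` gives the three cotangent sums.
-/

open Real Finset

theorem sum_range_mul_sin_mul_mul_four_sin_sq (θ : ℝ) (n : ℕ) :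
    (∑ j ∈ range n, (j : ℝ) * sin (j * θ)) * (4 * sin (θ / 2) ^ 2)
      = n * sin ((n - 1) * θ) - (n - 1) * sin (n * θ) := by
  induction n with
  | zero => simp
  | succ n ih =>
    have hcos : cos θ = 1 - 2 * sin (θ / 2) ^ 2 := by
      have h := cos_two_mul' (θ / 2)
      rw [mul_div_cancel₀ θ two_ne_zero] at h
      linear_combination h + sin_sq_add_cos_sq (θ / 2)
    have hprod : sin ((n - 1) * θ) + sin ((n + 1) * θ) = 2 * sin (n * θ) * cos θ := by
      rw [show (n - 1) * θ = n * θ - θ by ring, show (n + 1) * θ = n * θ + θ by ring,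
        sin_sub, sin_add]; ring
    rw [sum_range_succ, add_mul, ih]
    push_cast
    rw [add_sub_cancel_right]
    linear_combination (n : ℝ) * hprod + 2 * n * sin (n * θ) * hcos

theorem sum_Ico_mul_sin_pi_mul_mul_div {M k : ℕ} (hk : 1 ≤ k) (hkM : k < M) :
    ∑ j ∈ Ico 1 M, (j : ℝ) * sin (π * j * k / M)
      = M / 2 * (-1) ^ (k + 1) * cot (k * π / (2 * M)) := by
  have hM0 : 0 < M := by omega
  have hM : (0 : ℝ) < M := by exact_mod_cast hM0
  set θ : ℝ := k * π / M with hθ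
  have hhalf : θ / 2 = k * π / (2 * M) := by ring
  have hsin_half : 0 < sin (θ / 2) := by
    refine sin_pos_of_pos_of_lt_pi (by positivity) ?_
    rw [hhalf, div_lt_iff₀ (by positivity)]
    have : (k : ℝ) < M := by exact_mod_cast hkM
    nlinarith [pi_pos]
  have hsin : sin θ = 2 * sin (θ / 2) * cos (θ / 2) := by
    rw [← sin_two_mul, mul_div_cancel₀ θ two_ne_zero]
  have hsum := sum_range_mul_sin_mul_mul_four_sin_sq θ M
  rw [show (M - 1) * θ = k * π - θ by rw [hθ]; field_simp,
    show M * θ = k * π by rw [hθ]; field_simp, sin_nat_mul_pi, sin_nat_mul_pi_sub, hsin,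
    sum_range_eq_add_Ico _ hM0] at hsum
  have hθj : ∀ j : ℕ, π * j * k / M = j * θ := fun j => by rw [hθ]; ring
  simp only [hθj, cot_eq_cos_div_sin, ← hhalf]
  simp only [CharP.cast_eq_zero, zero_mul, zero_add, mul_zero, sub_zero] at hsum
  field_simp
  refine mul_left_cancel₀ (mul_ne_zero two_ne_zero hsin_half.ne') ?_
  linear_combination hsum

theorem sum_Ico_mul_sum_sin_pi_mul_mul_div (M : ℕ) (c : ℕ → ℝ) :
    ∑ j ∈ Ico 1 M, (j : ℝ) * ∑ k ∈ Ico 1 M, sin (π * j * k / M) * c k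
      = M / 2 * ∑ k ∈ Ico 1 M, (-1) ^ (k + 1) * cot (k * π / (2 * M)) * c k := by
  simp_rw [mul_sum, ← mul_assoc]
  rw [sum_comm]
  refine sum_congr rfl fun k hk => ?_
  rw [← sum_mul, sum_Ico_mul_sin_pi_mul_mul_div (mem_Ico.1 hk).1 (mem_Ico.1 hk).2]

theorem hasDerivAt_sum_mul_sin_mul_div (s : Finset ℕ) (c : ℕ → ℝ) (b : ℝ) :
    HasDerivAt (fun x => ∑ j ∈ s, c j * sin (j * π * x / b)) (∑ j ∈ s, c j * (j * π / b)) 0 := by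
  refine HasDerivAt.fun_sum fun j _ => ?_
  simpa using (((hasDerivAt_id (0 : ℝ)).const_mul (j * π)).div_const b).sin.const_mul (c j)

/-- Closed form for `ṽ'(0)` (with `N = 2M`) in terms of the grid
values `v₀, …, v_M` and cotangents. -/
theorem stmt_9 (M : ℕ) (hM : 2 ≤ M) (b : ℝ) (hb : 0 < b) (v : ℕ → ℝ) :
    let a₁ : ℝ := v 0
    let a₀ : ℝ := (v M - v 0) / b
    let B : ℕ → ℝ := fun j => (j : ℝ) ^ 2 * ∑ k ∈ Finset.Ico 1 M,
      Real.sin (Real.pi * (j : ℝ) * (k : ℝ) / (M : ℝ)) *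
        ((2 * a₁ * Real.pi ^ 2) / ((M : ℝ) * b ^ 2)
          + (2 * a₀ * Real.pi ^ 2 * (k : ℝ)) / (b * (M : ℝ) ^ 2)
          - (2 * Real.pi ^ 2 / ((M : ℝ) * b ^ 2)) * v k)
    let vt : ℝ → ℝ := fun x =>
      a₁ + a₀ * x - (b / Real.pi) ^ 2 *
        ∑ j ∈ Finset.Ico 1 M, (B j / (j : ℝ) ^ 2) * Real.sin ((j : ℝ) * Real.pi * x / b)
    deriv vt 0 =
      v 0 * ((Real.pi / (b * (M : ℝ))) * ∑ i ∈ Finset.Ico 1 M,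
              (-1 : ℝ) ^ (i + 1) * (i : ℝ) * Real.cot ((i : ℝ) * Real.pi / (2 * (M : ℝ)))
            - (Real.pi / b) * ∑ j ∈ Finset.Ico 1 M,
              (-1 : ℝ) ^ (j + 1) * Real.cot ((j : ℝ) * Real.pi / (2 * (M : ℝ)))
            - 1 / b)
      + v M * (1 / b - (Real.pi / (b * (M : ℝ))) * ∑ i ∈ Finset.Ico 1 M,
              (-1 : ℝ) ^ (i + 1) * (i : ℝ) * Real.cot ((i : ℝ) * Real.pi / (2 * (M : ℝ))))
      + (Real.pi / b) * ∑ i ∈ Finset.Ico 1 M,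
          (-1 : ℝ) ^ (i + 1) * v i * Real.cot ((i : ℝ) * Real.pi / (2 * (M : ℝ))) := by
  intro a₁ a₀ B vt
  set c : ℕ → ℝ := fun k => (2 * a₁ * π ^ 2) / ((M : ℝ) * b ^ 2)
    + (2 * a₀ * π ^ 2 * (k : ℝ)) / (b * (M : ℝ) ^ 2) - (2 * π ^ 2 / ((M : ℝ) * b ^ 2)) * v k
  have hvt : HasDerivAt vt (a₀ - (b / π) ^ 2 * ∑ j ∈ Ico 1 M, B j / j ^ 2 * (j * π / b)) 0 := by
    simpa using (((hasDerivAt_id (0 : ℝ)).const_mul a₀).const_add a₁).fun_sub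
      ((hasDerivAt_sum_mul_sin_mul_div _ _ b).const_mul ((b / π) ^ 2))
  have hB : ∀ j ∈ Ico 1 M, B j / j ^ 2 * (j * π / b)
      = π / b * (j * ∑ k ∈ Ico 1 M, sin (π * j * k / M) * c k) := fun j hj => by
    have : (j : ℝ) ≠ 0 := by have := (mem_Ico.1 hj).1; positivity
    simp only [B]
    rw [mul_div_cancel_left₀ _ (pow_ne_zero 2 this)]
    ring
  rw [hvt.deriv, sum_congr rfl hB, ← mul_sum, sum_Ico_mul_sum_sin_pi_mul_mul_div]
  have hsplit : ∑ k ∈ Ico 1 M, (-1) ^ (k + 1) * cot (k * π / (2 * M)) * c k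
      = 2 * π ^ 2 / (M * b ^ 2) * (a₁ * ∑ j ∈ Ico 1 M, (-1 : ℝ) ^ (j + 1) * cot (j * π / (2 * M))
        + a₀ * b / M * ∑ i ∈ Ico 1 M, (-1 : ℝ) ^ (i + 1) * i * cot (i * π / (2 * M))
        - ∑ i ∈ Ico 1 M, (-1 : ℝ) ^ (i + 1) * v i * cot (i * π / (2 * M))) := by
    simp only [mul_sum, ← sum_add_distrib, ← sum_sub_distrib]
    refine sum_congr rfl fun k _ => ?_
    simp only [c]
    field_simp
  rw [hsplit]
  have hM0 : (M : ℝ) ≠ 0 := Nat.cast_ne_zero.2 (by omega)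
  simp only [a₀, a₁]
  field_simp
  ring
end

section
/- With the above construction, assume additionally that M is even and set N = 2M. Then the derivative of ṽ at the right endpoint satisfies the closed form ṽ'(b) = v_0·( -(π/(bM)) Σ_{i=1}^{M-1} i·cot(iπ/N) + (π/b) Σ_{j=1}^{M-1} (-1)^{j+1} tan(jπ/N) - 1/b ) + v_M·( 1/b + (π/(bM)) Σ_{i=1}^{M-1} i·cot(iπ/N) ) - (π/b) Σ_{i=1}^{M-1} (-1)^{i+1} v_i·tan(iπ/N). -/
/-!
Differentiating term by term, `ṽ'(b) = a₀ - (b / π) ∑ⱼ (-1)ʲ j (bⱼ / j²)`, and `bⱼ / j²` is a discrete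
sine transform of the affine combination `a₁ + a₀ b k / M - v_k`. Exchanging the sums leaves the
kernel sums `∑ⱼ (-1)ʲ j sin (π j k / M)`, which telescope (multiply by `2 sin (θ / 2)`) to
`(-1)ᵏ (M / 2) tan (k π / 2M)` when `M` is even. The weight `∑ₖ (-1)ᵏ⁺¹ k tan (k π / 2M)` coming
from the linear part equals `∑ᵢ i cot (i π / 2M)`, because both are the same double sum of the
symmetric kernel `j k sin (π j k / M)`.
-/

open Real Finset

lemma Real.cot_pi_div_two_sub (x : ℝ) : cot (π / 2 - x) = tan x := by
  rw [cot_eq_cos_div_sin, cos_pi_div_two_sub, sin_pi_div_two_sub, tan_eq_sin_div_cos]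

lemma two_mul_sin_half_mul_sum_range_cos (θ : ℝ) (n : ℕ) :
    2 * sin (θ / 2) * ∑ j ∈ range n, cos ((j + 1 / 2) * θ) = sin (n * θ) := by
  induction n with
  | zero => simp
  | succ n ih =>
    have h := sin_sub_sin ((n + 1) * θ) (n * θ)
    rw [show ((n + 1) * θ - n * θ) / 2 = θ / 2 by ring,
      show ((n + 1) * θ + n * θ) / 2 = (n + 1 / 2) * θ by ring] at h
    rw [sum_range_succ, mul_add, ih]
    push_cast
    linarith

lemma two_mul_sin_half_mul_sum_range_mul_sin (θ : ℝ) (n : ℕ) :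
    2 * sin (θ / 2) * ∑ j ∈ range (n + 1), j * sin (j * θ)
      = ∑ j ∈ range n, cos ((j + 1 / 2) * θ) - n * cos ((n + 1 / 2) * θ) := by
  induction n with
  | zero => simp
  | succ n ih =>
    have h := cos_sub_cos ((n + 1 / 2) * θ) ((n + 3 / 2) * θ)
    rw [show ((n + 1 / 2) * θ + (n + 3 / 2) * θ) / 2 = (n + 1) * θ by ring,
      show ((n + 1 / 2) * θ - (n + 3 / 2) * θ) / 2 = -(θ / 2) by ring, sin_neg] at h
    rw [sum_range_succ (n := n + 1), mul_add, ih, sum_range_succ]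
    push_cast
    rw [show (n : ℝ) + 1 + 1 / 2 = n + 3 / 2 by ring]
    linear_combination (-(n : ℝ) - 1) * h

lemma sum_Ico_mul_sin_pi_mul_div {M m : ℕ} (hm : 1 ≤ m) (hmM : m < M) :
    ∑ j ∈ Ico 1 M, (j : ℝ) * sin (π * j * m / M)
      = (-1) ^ (m + 1) * (M / 2) * cot (m * π / (2 * M)) := by
  obtain ⟨n, rfl⟩ : ∃ n, M = n + 1 := ⟨M - 1, by omega⟩
  set θ : ℝ := m * π / (n + 1 : ℕ)
  have hhalf : m * π / (2 * (n + 1 : ℕ)) = θ / 2 := by ring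
  have hsin_pos : 0 < sin (θ / 2) := by
    rw [← hhalf]
    apply sin_pos_of_pos_of_lt_pi
    · have : (0 : ℝ) < m := by exact_mod_cast hm
      positivity
    · rw [div_lt_iff₀ (by positivity)]
      have : (m : ℝ) < 2 * (n + 1 : ℕ) := by exact_mod_cast (by omega : m < 2 * (n + 1))
      nlinarith [pi_pos]
  have hsum : ∑ j ∈ Ico 1 (n + 1), (j : ℝ) * sin (π * j * m / (n + 1 : ℕ))
      = ∑ j ∈ range (n + 1), j * sin (j * θ) := by
    rw [range_eq_Ico, sum_eq_sum_Ico_succ_bot (a := 0) (by omega)]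
    simp only [CharP.cast_eq_zero, zero_mul, zero_add, θ]
    congr! 3
    ring
  have hsin_n : sin (n * θ) = (-1) ^ (m + 1) * sin θ := by
    rw [show n * θ = m * π - θ by simp only [θ]; push_cast; field_simp; ring,
      sin_nat_mul_pi_sub]
    ring
  have hcos_n : cos ((n + 1 / 2) * θ) = (-1) ^ m * cos (θ / 2) := by
    rw [show (n + 1 / 2) * θ = m * π - θ / 2 by simp only [θ]; push_cast; field_simp; ring,
      cos_nat_mul_pi_sub]
  have hsin_double : sin θ = 2 * sin (θ / 2) * cos (θ / 2) := by
    rw [← sin_two_mul]; ring_nf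
  -- at `θ = m π / M` both telescoped sums collapse to multiples of `cos (θ / 2)`
  have h₁ := two_mul_sin_half_mul_sum_range_cos θ n
  have h₂ := two_mul_sin_half_mul_sum_range_mul_sin θ n
  rw [hsin_n, hsin_double] at h₁
  rw [hcos_n] at h₂
  rw [hsum, hhalf, cot_eq_cos_div_sin, mul_div_assoc', eq_div_iff hsin_pos.ne']
  refine mul_left_cancel₀ (mul_ne_zero two_ne_zero hsin_pos.ne') ?_
  push_cast
  linear_combination sin (θ / 2) * h₂ + (1 / 2) * h₁

/-- Reflecting `k ↦ M - k` turns the alternating sum into the one above; `M` even fixes the sign. -/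
lemma sum_Ico_neg_one_pow_mul_sin_pi_mul_div {M k : ℕ} (hM : Even M) (hk : 1 ≤ k) (hkM : k < M) :
    ∑ j ∈ Ico 1 M, (-1) ^ j * (j : ℝ) * sin (π * j * k / M)
      = (-1) ^ k * (M / 2) * tan (k * π / (2 * M)) := by
  have hM0 : (M : ℝ) ≠ 0 := by exact_mod_cast (by omega : M ≠ 0)
  have hcast : ((M - k : ℕ) : ℝ) = M - k := by push_cast [Nat.cast_sub hkM.le]; ring
  have hreflect (j : ℕ) : (-1) ^ j * (j : ℝ) * sin (π * j * k / M)
      = -(j * sin (π * j * (M - k : ℕ) / M)) := by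
    rw [show π * j * (M - k : ℕ) / M = j * π - π * j * k / M by rw [hcast]; field_simp,
      sin_nat_mul_pi_sub]
    ring
  have hsign : (-1 : ℝ) ^ (M - k) = (-1) ^ k :=
    neg_one_pow_congr (by rw [← Nat.even_add, Nat.sub_add_cancel hkM.le]; exact hM)
  rw [sum_congr rfl fun j _ => hreflect j, sum_neg_distrib,
    sum_Ico_mul_sin_pi_mul_div (by omega) (by omega),
    show (M - k : ℕ) * π / (2 * M) = π / 2 - k * π / (2 * M) by rw [hcast]; field_simp,
    cot_pi_div_two_sub, pow_succ, hsign]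
  ring

/-- Both sides are `2 / M` times the double sum of `(-1) ^ (j + 1) * j * k * sin (π j k / M)`
over `j, k`, taken in the two orders. -/
lemma sum_Ico_neg_one_pow_mul_tan_eq_sum_Ico_mul_cot {M : ℕ} (hM : Even M) :
    ∑ k ∈ Ico 1 M, (-1) ^ (k + 1) * (k : ℝ) * tan (k * π / (2 * M))
      = ∑ k ∈ Ico 1 M, (k : ℝ) * cot (k * π / (2 * M)) := by
  rcases Nat.eq_zero_or_pos M with rfl | hMpos
  · simp
  have hM0 : (M : ℝ) / 2 ≠ 0 := by positivity
  have htan : ∀ k ∈ Ico 1 M, (M / 2 : ℝ) * ((-1) ^ (k + 1) * k * tan (k * π / (2 * M)))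
      = ∑ j ∈ Ico 1 M, (-1) ^ (j + 1) * (j * k * sin (π * j * k / M)) := by
    intro k hk
    rw [mem_Ico] at hk
    rw [show ∑ j ∈ Ico 1 M, (-1) ^ (j + 1) * (j * k * sin (π * j * k / M))
        = -k * ∑ j ∈ Ico 1 M, (-1) ^ j * (j : ℝ) * sin (π * j * k / M) by
          rw [mul_sum]; exact sum_congr rfl fun _ _ => by ring,
      sum_Ico_neg_one_pow_mul_sin_pi_mul_div hM hk.1 hk.2]
    ring
  have hcot : ∀ k ∈ Ico 1 M, (M / 2 : ℝ) * (k * cot (k * π / (2 * M)))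
      = ∑ j ∈ Ico 1 M, (-1) ^ (k + 1) * (j * k * sin (π * j * k / M)) := by
    intro k hk
    rw [mem_Ico] at hk
    rw [show ∑ j ∈ Ico 1 M, (-1) ^ (k + 1) * (j * k * sin (π * j * k / M))
        = (-1) ^ (k + 1) * k * ∑ j ∈ Ico 1 M, (j : ℝ) * sin (π * j * k / M) by
          rw [mul_sum]; exact sum_congr rfl fun _ _ => by ring,
      sum_Ico_mul_sin_pi_mul_div hk.1 hk.2]
    have hsq : (-1 : ℝ) ^ (k + 1) * (-1) ^ (k + 1) = 1 := by rw [← mul_pow]; norm_num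
    linear_combination (-(M / 2 : ℝ) * k * cot (k * π / (2 * M))) * hsq
  refine mul_left_cancel₀ hM0 ?_
  rw [mul_sum, mul_sum, sum_congr rfl htan, sum_congr rfl hcot, sum_comm]
  exact sum_congr rfl fun _ _ => sum_congr rfl fun _ _ => by ring_nf

lemma sum_neg_one_pow_mul_sum_sin_pi_mul_div {M : ℕ} (hM : Even M) (c : ℕ → ℝ) :
    ∑ j ∈ Ico 1 M, (-1) ^ j * (j : ℝ) * ∑ k ∈ Ico 1 M, sin (π * j * k / M) * c k
      = M / 2 * ∑ k ∈ Ico 1 M, (-1) ^ k * tan (k * π / (2 * M)) * c k := by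
  simp_rw [mul_sum]
  rw [sum_comm]
  refine sum_congr rfl fun k hk => ?_
  rw [mem_Ico] at hk
  calc _ = (∑ j ∈ Ico 1 M, (-1) ^ j * (j : ℝ) * sin (π * j * k / M)) * c k := by
        rw [sum_mul]; exact sum_congr rfl fun _ _ => by ring
    _ = _ := by rw [sum_Ico_neg_one_pow_mul_sin_pi_mul_div hM hk.1 hk.2]; ring

lemma hasDerivAt_sum_mul_sin_nat_mul_pi_div (s : Finset ℕ) (β : ℕ → ℝ) {b : ℝ} (hb : b ≠ 0) :
    HasDerivAt (fun x => ∑ j ∈ s, β j * sin (j * π * x / b))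
      (π / b * ∑ j ∈ s, (-1) ^ j * (j : ℝ) * β j) b := by
  have hterm (j : ℕ) : HasDerivAt (fun x => β j * sin (j * π * x / b))
      (β j * (cos (j * π * b / b) * (j * π / b))) b :=
    ((((hasDerivAt_id b).const_mul (j * π)).div_const b).sin).const_mul (β j) |>.congr_deriv
      (by simp)
  refine (HasDerivAt.fun_sum fun j _ => hterm j).congr_deriv ?_
  rw [mul_sum]
  refine sum_congr rfl fun j _ => ?_
  rw [mul_div_cancel_right₀ _ hb, cos_nat_mul_pi]
  ring

/-- Closed form for `ṽ'(b)` (with `M` even, `N = 2M`) in terms of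
the grid values `v₀, …, v_M`, cotangents and tangents. -/
theorem stmt_10 (M : ℕ) (hM : 2 ≤ M) (hMeven : Even M) (b : ℝ) (hb : 0 < b) (v : ℕ → ℝ) :
    let a₁ : ℝ := v 0
    let a₀ : ℝ := (v M - v 0) / b
    let B : ℕ → ℝ := fun j => (j : ℝ) ^ 2 * ∑ k ∈ Finset.Ico 1 M,
      Real.sin (Real.pi * (j : ℝ) * (k : ℝ) / (M : ℝ)) *
        ((2 * a₁ * Real.pi ^ 2) / ((M : ℝ) * b ^ 2)
          + (2 * a₀ * Real.pi ^ 2 * (k : ℝ)) / (b * (M : ℝ) ^ 2)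
          - (2 * Real.pi ^ 2 / ((M : ℝ) * b ^ 2)) * v k)
    let vt : ℝ → ℝ := fun x =>
      a₁ + a₀ * x - (b / Real.pi) ^ 2 *
        ∑ j ∈ Finset.Ico 1 M, (B j / (j : ℝ) ^ 2) * Real.sin ((j : ℝ) * Real.pi * x / b)
    deriv vt b =
      v 0 * (-(Real.pi / (b * (M : ℝ))) * ∑ i ∈ Finset.Ico 1 M,
              (i : ℝ) * Real.cot ((i : ℝ) * Real.pi / (2 * (M : ℝ)))
            + (Real.pi / b) * ∑ j ∈ Finset.Ico 1 M,
              (-1 : ℝ) ^ (j + 1) * Real.tan ((j : ℝ) * Real.pi / (2 * (M : ℝ)))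
            - 1 / b)
      + v M * (1 / b + (Real.pi / (b * (M : ℝ))) * ∑ i ∈ Finset.Ico 1 M,
              (i : ℝ) * Real.cot ((i : ℝ) * Real.pi / (2 * (M : ℝ))))
      - (Real.pi / b) * ∑ i ∈ Finset.Ico 1 M,
          (-1 : ℝ) ^ (i + 1) * v i * Real.tan ((i : ℝ) * Real.pi / (2 * (M : ℝ))) := by
  intro a₁ a₀ B vt
  have hb0 : b ≠ 0 := hb.ne'
  have hM0 : (M : ℝ) ≠ 0 := by exact_mod_cast (by omega : M ≠ 0)
  set tan' : ℕ → ℝ := fun k => tan (k * π / (2 * M))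
  have hB : ∀ j ∈ Ico 1 M, B j / (j : ℝ) ^ 2 = ∑ k ∈ Ico 1 M, sin (π * j * k / M) *
      (2 * π ^ 2 / (M * b ^ 2) * (a₁ + a₀ * b * k / M - v k)) := by
    intro j hj
    rw [mul_div_cancel_left₀ _ (pow_ne_zero 2 (Nat.cast_ne_zero.2 (by rw [mem_Ico] at hj; omega)))]
    exact sum_congr rfl fun k _ => by field_simp
  have hvt : HasDerivAt vt (a₀ - (b / π) ^ 2 *
      (π / b * ∑ j ∈ Ico 1 M, (-1) ^ j * (j : ℝ) * (B j / (j : ℝ) ^ 2))) b :=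
    (((hasDerivAt_id b).const_mul a₀).const_add a₁).sub
      ((hasDerivAt_sum_mul_sin_nat_mul_pi_div _ _ hb0).const_mul _) |>.congr_deriv (by simp)
  have hsplit : ∑ k ∈ Ico 1 M, (-1) ^ k * tan' k *
      (2 * π ^ 2 / (M * b ^ 2) * (a₁ + a₀ * b * k / M - v k))
      = 2 * π ^ 2 / (M * b ^ 2) * (-a₁ * ∑ k ∈ Ico 1 M, (-1) ^ (k + 1) * tan' k
        - a₀ * b / M * ∑ k ∈ Ico 1 M, (-1) ^ (k + 1) * (k : ℝ) * tan' k
        + ∑ k ∈ Ico 1 M, (-1) ^ (k + 1) * v k * tan' k) := by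
    simp only [mul_add, mul_sub, mul_sum, ← sum_add_distrib, ← sum_sub_distrib]
    exact sum_congr rfl fun k _ => by ring
  rw [hvt.deriv, sum_congr rfl fun j hj => by rw [hB j hj],
    sum_neg_one_pow_mul_sum_sin_pi_mul_div hMeven, hsplit,
    ← sum_Ico_neg_one_pow_mul_tan_eq_sum_Ico_mul_cot hMeven]
  simp only [tan', a₀, a₁]
  field_simp
  ring
end

section
/- With the above construction and N = 2M, for every interior grid index 0 < i < M the derivative of ṽ at x = ib/M satisfies the closed form ṽ'(ib/M) = v_0·( (π/(2b)) Σ_{k=1}^{M-1} (-1)^{i+k} c(k,i) - (π/(2bM)) Σ_{k=1}^{M-1} (-1)^{i+k} k·c(k,i) - 1/b ) + v_M·( (π/(2bM)) Σ_{k=1}^{M-1} (-1)^{i+k} k·c(k,i) + 1/b ) - (π/(2b)) Σ_{k=1}^{M-1} (-1)^{i+k} c(k,i)·v_k, where c(k,i) := Cot((k+i)π/N) + Cot((k-i)π/N) and Cot(x) = cot(x) if x/π is not an integer and Cot(x) = 0 otherwise. -/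
/-!
Differentiating the sine series termwise and exchanging the two finite sums reduces `ṽ'(ib/M)`
to the sums `∑_{0<j<M} j sin(jπk/M) cos(jπi/M)`. By product-to-sum these are sums
`∑_{0<j<M} j sin(jθ)` with `Mθ ∈ πℤ`, and the telescoping identity
`4 sin²(θ/2) ∑_{0<j<M} j sin(jθ) = M sin((M-1)θ) - (M-1) sin(Mθ)`
evaluates them to `-(M/2) cos(Mθ) cot(θ/2)`.
-/

open scoped Classical

open Real Finset

namespace Real

lemma cot_int_mul_pi (m : ℤ) : cot (m * π) = 0 := by
  rw [cot_eq_cos_div_sin, sin_int_mul_pi, div_zero]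

/-- The paper's `Cot` is `Real.cot` itself: at multiples of `π`, `cot = cos / sin` takes the
junk value `x / 0 = 0`. -/
lemma ite_int_mul_pi_cot_eq_cot (x : ℝ) :
    (if ∃ m : ℤ, x = m * π then 0 else cot x) = cot x := by
  split_ifs with h
  · obtain ⟨m, rfl⟩ := h
    exact (cot_int_mul_pi m).symm
  · rfl

lemma four_mul_sin_sq_half_mul_sum_mul_sin (θ : ℝ) (M : ℕ) :
    4 * sin (θ / 2) ^ 2 * ∑ j ∈ Ico 1 M, (j : ℝ) * sin (j * θ) =
      M * sin ((M - 1) * θ) - (M - 1) * sin (M * θ) := by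
  induction M with
  | zero => simp
  | succ n ih =>
    rcases Nat.eq_zero_or_pos n with rfl | hn
    · simp
    have hcos : cos θ = 1 - 2 * sin (θ / 2) ^ 2 := by
      rw [sin_sq_eq_half_sub, mul_div_cancel₀ θ two_ne_zero]; ring
    have hsub : sin ((n - 1) * θ) = sin (n * θ) * cos θ - cos (n * θ) * sin θ := by
      rw [sub_one_mul, sin_sub]
    have hadd : sin ((n + 1) * θ) = sin (n * θ) * cos θ + cos (n * θ) * sin θ := by
      rw [add_one_mul, sin_add]
    rw [sum_Ico_succ_top hn]
    push_cast
    rw [add_sub_cancel_right, hadd]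
    linear_combination ih + n * hsub + 2 * n * sin (n * θ) * hcos

lemma sum_mul_sin_of_sin_mul_eq_zero (M : ℕ) {θ : ℝ} (h : sin (M * θ) = 0) :
    ∑ j ∈ Ico 1 M, (j : ℝ) * sin (j * θ) = -(M / 2) * cos (M * θ) * cot (θ / 2) := by
  by_cases hs : sin (θ / 2) = 0
  · obtain ⟨n, hn⟩ := sin_eq_zero_iff.1 hs
    obtain rfl : θ = 2 * n * π := by linarith
    have hj : ∀ j : ℕ, sin (j * (2 * n * π)) = 0 := fun j => by
      rw [show (j : ℝ) * (2 * n * π) = ((2 * j * n : ℤ) : ℝ) * π by push_cast; ring,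
        sin_int_mul_pi]
    simp [hj, cot_eq_cos_div_sin, hs]
  · have H := four_mul_sin_sq_half_mul_sum_mul_sin θ M
    rw [h, sub_one_mul, sin_sub, h, show θ = 2 * (θ / 2) by ring, sin_two_mul,
      ← show θ = 2 * (θ / 2) by ring] at H
    rw [cot_eq_cos_div_sin, ← mul_div_assoc, eq_div_iff hs]
    apply mul_left_cancel₀ (mul_ne_zero four_ne_zero hs)
    linear_combination H

lemma sum_mul_sin_mul_cos_eq (M k i : ℕ) (hM : (M : ℝ) ≠ 0) :
    ∑ j ∈ Ico 1 M, (j : ℝ) * (sin (π * j * k / M) * cos (j * π * i / M)) =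
      -(M / 4) * (-1) ^ (i + k) *
        (cot ((k + i) * π / (2 * M)) + cot ((k - i) * π / (2 * M))) := by
  have hplus : (M : ℝ) * ((k + i) * π / M) = (k + i : ℕ) * π := by push_cast; field_simp
  have hminus : (M : ℝ) * ((k - i) * π / M) = k * π - i * π := by field_simp
  have hsum_plus := sum_mul_sin_of_sin_mul_eq_zero M (θ := (k + i) * π / M)
    (by rw [hplus, sin_nat_mul_pi])
  have hsum_minus := sum_mul_sin_of_sin_mul_eq_zero M (θ := (k - i) * π / M)
    (by rw [hminus, sin_sub, sin_nat_mul_pi, sin_nat_mul_pi]; ring)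
  rw [hplus, cos_nat_mul_pi] at hsum_plus
  rw [hminus, cos_nat_mul_pi_sub, cos_nat_mul_pi] at hsum_minus
  calc ∑ j ∈ Ico 1 M, (j : ℝ) * (sin (π * j * k / M) * cos (j * π * i / M))
      = (1 / 2) * ∑ j ∈ Ico 1 M, (j : ℝ) * sin (j * ((k + i) * π / M))
        + (1 / 2) * ∑ j ∈ Ico 1 M, (j : ℝ) * sin (j * ((k - i) * π / M)) := by
        rw [mul_sum, mul_sum, ← sum_add_distrib]
        refine sum_congr rfl fun j _ => ?_
        rw [show (j : ℝ) * ((k + i) * π / M) = π * j * k / M + j * π * i / M by ring,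
          show (j : ℝ) * ((k - i) * π / M) = π * j * k / M - j * π * i / M by ring,
          sin_add, sin_sub]
        ring
    _ = _ := by
        rw [hsum_plus, hsum_minus, show (k + i) * π / M / 2 = (k + i) * π / (2 * M) by ring,
          show (k - i) * π / M / 2 = (k - i) * π / (2 * M) by ring]
        ring

lemma sum_sum_sin_mul_mul_cos_eq (M i : ℕ) (hM : (M : ℝ) ≠ 0) (w : ℕ → ℝ) :
    ∑ j ∈ Ico 1 M,
        (∑ k ∈ Ico 1 M, sin (π * j * k / M) * w k) * (j * cos (j * π * i / M)) =
      -(M / 4) * ∑ k ∈ Ico 1 M,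
        (-1) ^ (i + k) * (cot ((k + i) * π / (2 * M)) + cot ((k - i) * π / (2 * M))) *
          w k := by
  simp_rw [sum_mul, mul_sum]
  rw [sum_comm]
  refine sum_congr rfl fun k _ => ?_
  rw [← mul_assoc, ← mul_assoc, ← sum_mul_sin_mul_cos_eq M k i hM, sum_mul]
  refine sum_congr rfl fun j _ => ?_
  ring

end Real

lemma hasDerivAt_sum_mul_sin (s : Finset ℕ) (a : ℕ → ℝ) (b x : ℝ) :
    HasDerivAt (fun x => ∑ j ∈ s, a j * sin (j * π * x / b))
      (∑ j ∈ s, a j * (cos (j * π * x / b) * (j * π / b))) x := by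
  refine HasDerivAt.fun_sum fun j _ => HasDerivAt.const_mul _ (HasDerivAt.sin ?_)
  simpa using ((hasDerivAt_id x).const_mul ((j : ℝ) * π)).div_const b

theorem stmt_11_general (M : ℕ) (b : ℝ) (hb : 0 < b) (v : ℕ → ℝ) :
    let a₁ : ℝ := v 0
    let a₀ : ℝ := (v M - v 0) / b
    let B : ℕ → ℝ := fun j => (j : ℝ) ^ 2 * ∑ k ∈ Finset.Ico 1 M,
      Real.sin (Real.pi * (j : ℝ) * (k : ℝ) / (M : ℝ)) *
        ((2 * a₁ * Real.pi ^ 2) / ((M : ℝ) * b ^ 2)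
          + (2 * a₀ * Real.pi ^ 2 * (k : ℝ)) / (b * (M : ℝ) ^ 2)
          - (2 * Real.pi ^ 2 / ((M : ℝ) * b ^ 2)) * v k)
    let vt : ℝ → ℝ := fun x =>
      a₁ + a₀ * x - (b / Real.pi) ^ 2 *
        ∑ j ∈ Finset.Ico 1 M, (B j / (j : ℝ) ^ 2) * Real.sin ((j : ℝ) * Real.pi * x / b)
    let Cot : ℝ → ℝ := fun x => if ∃ m : ℤ, x = (m : ℝ) * Real.pi then 0 else Real.cot x
    let c : ℕ → ℕ → ℝ := fun k i =>
      Cot (((k : ℝ) + (i : ℝ)) * Real.pi / (2 * (M : ℝ)))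
        + Cot (((k : ℝ) - (i : ℝ)) * Real.pi / (2 * (M : ℝ)))
    ∀ i : ℕ, 0 < i → i < M →
      deriv vt ((i : ℝ) * b / (M : ℝ)) =
        v 0 * ((Real.pi / (2 * b)) * (∑ k ∈ Finset.Ico 1 M, (-1 : ℝ) ^ (i + k) * c k i)
              - (Real.pi / (2 * b * (M : ℝ))) *
                  (∑ k ∈ Finset.Ico 1 M, (-1 : ℝ) ^ (i + k) * (k : ℝ) * c k i)
              - 1 / b)
        + v M * ((Real.pi / (2 * b * (M : ℝ))) *
                  (∑ k ∈ Finset.Ico 1 M, (-1 : ℝ) ^ (i + k) * (k : ℝ) * c k i)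
              + 1 / b)
        - (Real.pi / (2 * b)) * ∑ k ∈ Finset.Ico 1 M, (-1 : ℝ) ^ (i + k) * c k i * v k := by
  intro a₁ a₀ B vt Cot c i _ hiM
  have hM : (M : ℝ) ≠ 0 := Nat.cast_ne_zero.2 (by omega)
  have hc : ∀ k, c k i = cot ((k + i) * π / (2 * M)) + cot ((k - i) * π / (2 * M)) :=
    fun k => by simp only [c, Cot, ite_int_mul_pi_cot_eq_cot]
  set w : ℕ → ℝ := fun k => (2 * a₁ * π ^ 2) / (M * b ^ 2)
    + (2 * a₀ * π ^ 2 * k) / (b * M ^ 2) - (2 * π ^ 2 / (M * b ^ 2)) * v k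
  have hB : ∀ j ∈ Ico 1 M,
      B j / (j : ℝ) ^ 2 = ∑ k ∈ Ico 1 M, sin (π * j * k / M) * w k :=
    fun j hj => mul_div_cancel_left₀ _
      (pow_ne_zero 2 (Nat.cast_ne_zero.2 (by simp at hj; omega)))
  set x₀ : ℝ := i * b / M
  have hx₀ : ∀ j : ℕ, (j : ℝ) * π * x₀ / b = j * π * i / M := fun j => by
    simp only [x₀]; field_simp
  have hder : HasDerivAt vt _ x₀ := ((((hasDerivAt_id x₀).const_mul a₀).const_add a₁).sub
    ((hasDerivAt_sum_mul_sin (Ico 1 M) (fun j => B j / (j : ℝ) ^ 2) b x₀).const_mul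
      ((b / π) ^ 2)))
  rw [hder.deriv]
  calc _ = a₀ - (b / π) ^ 2 * (π / b) * ∑ j ∈ Ico 1 M,
        (∑ k ∈ Ico 1 M, sin (π * j * k / M) * w k) * (j * cos (j * π * i / M)) := by
        rw [mul_one, mul_assoc, mul_sum (Ico 1 M) _ (π / b)]
        congr 2
        refine sum_congr rfl fun j hj => ?_
        rw [hB j hj, hx₀]
        ring
    _ = a₀ - (b / π) ^ 2 * (π / b) *
          (-(M / 4) * ∑ k ∈ Ico 1 M, (-1) ^ (i + k) * c k i * w k) := by
        simp only [sum_sum_sin_mul_mul_cos_eq M i hM, hc]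
    _ = _ := by
        have hsplit : ∀ k ∈ Ico 1 M, (-1) ^ (i + k) * c k i * w k =
            (2 * a₁ * π ^ 2) / (M * b ^ 2) * ((-1) ^ (i + k) * c k i)
              + (2 * a₀ * π ^ 2) / (b * M ^ 2) * ((-1) ^ (i + k) * k * c k i)
              - (2 * π ^ 2 / (M * b ^ 2)) * ((-1) ^ (i + k) * c k i * v k) := fun k _ => by
          simp only [w]; ring
        rw [sum_congr rfl hsplit, sum_sub_distrib, sum_add_distrib, ← mul_sum, ← mul_sum,
          ← mul_sum]
        simp only [a₀, a₁]
        field_simp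
        ring

/-- Closed form for `ṽ'(ib/M)` at interior grid indices `0 < i < M`
(with `N = 2M`), where `c(k,i) = Cot((k+i)π/N) + Cot((k-i)π/N)` and `Cot(x)` is
`cot(x)` when `x/π` is not an integer and `0` otherwise. -/
theorem stmt_11 (M : ℕ) (hM : 2 ≤ M) (b : ℝ) (hb : 0 < b) (v : ℕ → ℝ) :
    let a₁ : ℝ := v 0
    let a₀ : ℝ := (v M - v 0) / b
    let B : ℕ → ℝ := fun j => (j : ℝ) ^ 2 * ∑ k ∈ Finset.Ico 1 M,
      Real.sin (Real.pi * (j : ℝ) * (k : ℝ) / (M : ℝ)) *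
        ((2 * a₁ * Real.pi ^ 2) / ((M : ℝ) * b ^ 2)
          + (2 * a₀ * Real.pi ^ 2 * (k : ℝ)) / (b * (M : ℝ) ^ 2)
          - (2 * Real.pi ^ 2 / ((M : ℝ) * b ^ 2)) * v k)
    let vt : ℝ → ℝ := fun x =>
      a₁ + a₀ * x - (b / Real.pi) ^ 2 *
        ∑ j ∈ Finset.Ico 1 M, (B j / (j : ℝ) ^ 2) * Real.sin ((j : ℝ) * Real.pi * x / b)
    let Cot : ℝ → ℝ := fun x => if ∃ m : ℤ, x = (m : ℝ) * Real.pi then 0 else Real.cot x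
    let c : ℕ → ℕ → ℝ := fun k i =>
      Cot (((k : ℝ) + (i : ℝ)) * Real.pi / (2 * (M : ℝ)))
        + Cot (((k : ℝ) - (i : ℝ)) * Real.pi / (2 * (M : ℝ)))
    ∀ i : ℕ, 0 < i → i < M →
      deriv vt ((i : ℝ) * b / (M : ℝ)) =
        v 0 * ((Real.pi / (2 * b)) * (∑ k ∈ Finset.Ico 1 M, (-1 : ℝ) ^ (i + k) * c k i)
              - (Real.pi / (2 * b * (M : ℝ))) *
                  (∑ k ∈ Finset.Ico 1 M, (-1 : ℝ) ^ (i + k) * (k : ℝ) * c k i)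
              - 1 / b)
        + v M * ((Real.pi / (2 * b * (M : ℝ))) *
                  (∑ k ∈ Finset.Ico 1 M, (-1 : ℝ) ^ (i + k) * (k : ℝ) * c k i)
              + 1 / b)
        - (Real.pi / (2 * b)) * ∑ k ∈ Finset.Ico 1 M, (-1 : ℝ) ^ (i + k) * c k i * v k :=
  stmt_11_general M b hb v
end

section
/- If y: ℝ → ℝ is twice differentiable and satisfies y''(x) + 2π y'(x) + (5/4)π² y(x) = 0 for all x ∈ [1, 3], then y(x) = c₁ y₁(x) + c₂ y₂(x) for all x ∈ [1, 3], where c₁ = y(1) and c₂ = (2/π)·y'(1). -/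
/-- `y₁(x) = e^{-π(x-1)}(cos(π(x-1)/2) + 2 sin(π(x-1)/2))`. -/
noncomputable def y₁ (x : ℝ) : ℝ :=
  Real.exp (-Real.pi * (x - 1)) *
    (Real.cos (Real.pi * (x - 1) / 2) + 2 * Real.sin (Real.pi * (x - 1) / 2))

/-- `y₂(x) = e^{-π(x-1)} sin(π(x-1)/2)`. -/
noncomputable def y₂ (x : ℝ) : ℝ :=
  Real.exp (-Real.pi * (x - 1)) * Real.sin (Real.pi * (x - 1) / 2)

/-! `y₁` and `y₂` are damped oscillations `e^{-α(x-x₀)}(A cos ω(x-x₀) + B sin ω(x-x₀))` with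
`α = π`, `ω = π/2`, `x₀ = 1`. Such functions solve `y'' + 2αy' + (α² + ω²)y = 0` (characteristic
roots `-α ± iω`), which for these values is the given equation. Differentiation acts linearly on
the coefficients `(A, B)`, so one damped oscillation matches the initial data `y(1)`, `y'(1)`;
uniqueness for the first-order system in `(y, y')`, whose right-hand side is linear and hence
Lipschitz, then gives equality on `[1, 3]`. -/

open Real Set

theorem eqOn_Icc_of_linear_ode (p q : ℝ) {a b : ℝ} {y y' z z' : ℝ → ℝ}
    (hy : ∀ x ∈ Icc a b, HasDerivAt y (y' x) x)
    (hy' : ∀ x ∈ Icc a b, HasDerivAt y' (-(p * y' x + q * y x)) x)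
    (hz : ∀ x ∈ Icc a b, HasDerivAt z (z' x) x)
    (hz' : ∀ x ∈ Icc a b, HasDerivAt z' (-(p * z' x + q * z x)) x)
    (h₀ : y a = z a) (h₀' : y' a = z' a) :
    EqOn y z (Icc a b) := by
  let L : ℝ × ℝ →L[ℝ] ℝ × ℝ :=
    (ContinuousLinearMap.snd ℝ ℝ ℝ).prod
      (-(p • ContinuousLinearMap.snd ℝ ℝ ℝ + q • ContinuousLinearMap.fst ℝ ℝ ℝ))
  have hL (u u' : ℝ) : L (u, u') = (u', -(p * u' + q * u)) := by simp [L]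
  have hsystem {u u' : ℝ → ℝ} (hu : ∀ x ∈ Icc a b, HasDerivAt u (u' x) x)
      (hu' : ∀ x ∈ Icc a b, HasDerivAt u' (-(p * u' x + q * u x)) x) :
      ∀ x ∈ Icc a b, HasDerivAt (fun t ↦ (u t, u' t)) (L (u x, u' x)) x := fun x hx ↦
    hL _ _ ▸ (hu x hx).prodMk (hu' x hx)
  have hys := hsystem hy hy'
  have hzs := hsystem hz hz'
  have hyz := ODE_solution_unique (v := fun _ ↦ L) (fun _ ↦ L.lipschitz)
    (HasDerivAt.continuousOn hys) (fun x hx ↦ (hys x (Ico_subset_Icc_self hx)).hasDerivWithinAt)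
    (HasDerivAt.continuousOn hzs) (fun x hx ↦ (hzs x (Ico_subset_Icc_self hx)).hasDerivWithinAt)
    (by rw [h₀, h₀'])
  exact fun x hx ↦ congrArg Prod.fst (hyz hx)

noncomputable def dampedOsc (α ω x₀ A B x : ℝ) : ℝ :=
  exp (-α * (x - x₀)) * (A * cos (ω * (x - x₀)) + B * sin (ω * (x - x₀)))

section DampedOsc

variable (α ω x₀ : ℝ)

@[simp]
theorem dampedOsc_self (A B : ℝ) : dampedOsc α ω x₀ A B x₀ = A := by
  simp [dampedOsc]

theorem hasDerivAt_dampedOsc (A B x : ℝ) :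
    HasDerivAt (dampedOsc α ω x₀ A B)
      (dampedOsc α ω x₀ (-α * A + ω * B) (-ω * A - α * B) x) x := by
  have hlin (c : ℝ) : HasDerivAt (fun x ↦ c * (x - x₀)) c x := by
    simpa using ((hasDerivAt_id x).sub_const x₀).const_mul c
  have h := ((hlin (-α)).exp).mul
    (((hlin ω).cos.const_mul A).add ((hlin ω).sin.const_mul B))
  exact h.congr_deriv (by simp only [dampedOsc, Pi.add_apply]; ring)

theorem hasDerivAt_dampedOsc_deriv (A B x : ℝ) :
    HasDerivAt (dampedOsc α ω x₀ (-α * A + ω * B) (-ω * A - α * B))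
      (-(2 * α * dampedOsc α ω x₀ (-α * A + ω * B) (-ω * A - α * B) x
        + (α ^ 2 + ω ^ 2) * dampedOsc α ω x₀ A B x)) x :=
  (hasDerivAt_dampedOsc α ω x₀ _ _ x).congr_deriv (by simp only [dampedOsc]; ring)

end DampedOsc

theorem y₁_eq_dampedOsc : y₁ = dampedOsc π (π / 2) 1 1 2 := by
  ext x
  simp only [y₁, dampedOsc, div_mul_eq_mul_div, one_mul]

theorem y₂_eq_dampedOsc : y₂ = dampedOsc π (π / 2) 1 0 1 := by
  ext x
  simp only [y₂, dampedOsc, div_mul_eq_mul_div, one_mul, zero_mul, zero_add]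

/-- Any twice differentiable `y` solving
`y'' + 2πy' + (5/4)π²y = 0` on `[1,3]` equals `c₁y₁ + c₂y₂` on `[1,3]`,
with `c₁ = y(1)` and `c₂ = (2/π)y'(1)`. -/
theorem stmt_15 (y : ℝ → ℝ) (hy : Differentiable ℝ y) (hy' : Differentiable ℝ (deriv y))
    (hode : ∀ x ∈ Set.Icc (1 : ℝ) 3,
      deriv (deriv y) x + 2 * Real.pi * deriv y x + (5 / 4) * Real.pi ^ 2 * y x = 0) :
    ∀ x ∈ Set.Icc (1 : ℝ) 3,
      y x = y 1 * y₁ x + (2 / Real.pi) * deriv y 1 * y₂ x := by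
  set A := y 1
  set B := 2 * y 1 + (2 / π) * deriv y 1
  have hfit : EqOn y (dampedOsc π (π / 2) 1 A B) (Icc 1 3) := by
    refine eqOn_Icc_of_linear_ode (2 * π) (5 / 4 * π ^ 2)
      (fun x _ ↦ (hy x).hasDerivAt) (fun x hx ↦ ?_)
      (fun x _ ↦ hasDerivAt_dampedOsc _ _ _ A B x)
      (fun x _ ↦ (hasDerivAt_dampedOsc_deriv _ _ _ A B x).congr_deriv (by ring))
      (dampedOsc_self ..).symm (by simp only [dampedOsc_self, B]; field_simp; ring)
    exact (hy' x).hasDerivAt.congr_deriv (by linarith [hode x hx])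
  intro x hx
  rw [hfit hx, y₁_eq_dampedOsc, y₂_eq_dampedOsc]
  simp only [dampedOsc, B]
  ring
end

section
/- For every α, β ∈ ℝ, the function y = α y₁ - (2/π)e^{2π}β y₂ is the unique (up to its values on [1,3]) twice differentiable solution of y''(x) + 2π y'(x) + (5/4)π² y(x) = 0 on [1, 3] satisfying the mixed conditions y(1) = α and y'(3) = β: any twice differentiable y satisfying the equation on [1,3] with y(1) = α and y'(3) = β agrees with α y₁ - (2/π)e^{2π}β y₂ on [1, 3]. -/
/-!
A solution of `u'' + p u' + q u = 0` gives a solution `(u, u')` of a linear, hence Lipschitz,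
first-order system, so it is determined on `[1, 3]` by its value and slope at `1`. The solutions
`a y₁ + b y₂` have value `a` and slope `(π/2) b` at `1`, so every solution with `y(1) = α` is
`α y₁ + b y₂` on `[1, 3]` for some `b`. Since `y₁'(3) = 0` and `y₂'(3) = -(π/2) e^{-2π}`, the
condition `y'(3) = β` then forces `b = -(2/π) e^{2π} β`.
-/

open Real Set

def SolvesLinearODE (p q : ℝ) (s : Set ℝ) (y : ℝ → ℝ) : Prop :=
  ∀ x ∈ s, deriv (deriv y) x + p * deriv y x + q * y x = 0

section LinearODE

variable {p q : ℝ}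

def companion (p q : ℝ) : ℝ × ℝ →L[ℝ] ℝ × ℝ :=
  (ContinuousLinearMap.snd ℝ ℝ ℝ).prod
    ((-q) • ContinuousLinearMap.fst ℝ ℝ ℝ - p • ContinuousLinearMap.snd ℝ ℝ ℝ)

theorem companion_apply (v : ℝ × ℝ) : companion p q v = (v.2, -q * v.1 - p * v.2) := rfl

theorem hasDerivAt_value_slope {f : ℝ → ℝ} {t : ℝ} (hf : DifferentiableAt ℝ f t)
    (hf' : DifferentiableAt ℝ (deriv f) t)
    (ht : deriv (deriv f) t + p * deriv f t + q * f t = 0) :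
    HasDerivAt (fun t => (f t, deriv f t)) (companion p q (f t, deriv f t)) t := by
  rw [companion_apply, show -q * f t - p * deriv f t = deriv (deriv f) t by linarith]
  exact hf.hasDerivAt.prodMk hf'.hasDerivAt

theorem SolvesLinearODE.eqOn_of_initial {a b : ℝ} {f g : ℝ → ℝ}
    (hf : Differentiable ℝ f) (hf' : Differentiable ℝ (deriv f))
    (hg : Differentiable ℝ g) (hg' : Differentiable ℝ (deriv g))
    (hfs : SolvesLinearODE p q (Icc a b) f) (hgs : SolvesLinearODE p q (Icc a b) g)
    (ha : f a = g a) (ha' : deriv f a = deriv g a) :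
    EqOn f g (Icc a b) ∧ EqOn (deriv f) (deriv g) (Icc a b) := by
  have key : EqOn (fun t => (f t, deriv f t)) (fun t => (g t, deriv g t)) (Icc a b) :=
    ODE_solution_unique (v := fun _ => companion p q) (fun _ => (companion p q).lipschitz)
      (hf.continuous.prodMk hf'.continuous).continuousOn
      (fun t ht => (hasDerivAt_value_slope (hf t) (hf' t)
        (hfs t (Ico_subset_Icc_self ht))).hasDerivWithinAt)
      (hg.continuous.prodMk hg'.continuous).continuousOn
      (fun t ht => (hasDerivAt_value_slope (hg t) (hg' t)
        (hgs t (Ico_subset_Icc_self ht))).hasDerivWithinAt)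
      (Prod.ext ha ha')
  exact ⟨fun t ht => congrArg Prod.fst (key ht), fun t ht => congrArg Prod.snd (key ht)⟩

end LinearODE

noncomputable def dy₂ (x : ℝ) : ℝ :=
  exp (-π * (x - 1)) * (π / 2 * cos (π * (x - 1) / 2) - π * sin (π * (x - 1) / 2))

theorem hasDerivAt_exp_decay (x : ℝ) :
    HasDerivAt (fun x : ℝ => exp (-π * (x - 1))) (exp (-π * (x - 1)) * (-π)) x := by
  simpa using (((hasDerivAt_id x).sub_const 1).const_mul (-π)).exp

theorem hasDerivAt_angle (x : ℝ) : HasDerivAt (fun x : ℝ => π * (x - 1) / 2) (π / 2) x := by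
  simpa using (((hasDerivAt_id x).sub_const 1).const_mul π).div_const 2

theorem hasDerivAt_y₁ (x : ℝ) : HasDerivAt y₁ (-(5 * π / 2) * y₂ x) x := by
  refine ((hasDerivAt_exp_decay x).mul
    ((hasDerivAt_angle x).cos.add ((hasDerivAt_angle x).sin.const_mul 2))).congr_deriv ?_
  simp only [Pi.add_apply, y₂]
  ring

theorem hasDerivAt_y₂ (x : ℝ) : HasDerivAt y₂ (dy₂ x) x := by
  refine ((hasDerivAt_exp_decay x).mul (hasDerivAt_angle x).sin).congr_deriv ?_
  simp only [dy₂]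
  ring

theorem hasDerivAt_dy₂ (x : ℝ) :
    HasDerivAt dy₂ (-(5 / 4 * π ^ 2) * y₂ x - 2 * π * dy₂ x) x := by
  refine ((hasDerivAt_exp_decay x).mul (((hasDerivAt_angle x).cos.const_mul (π / 2)).sub
    ((hasDerivAt_angle x).sin.const_mul π))).congr_deriv ?_
  simp only [Pi.sub_apply, y₂, dy₂]
  ring

noncomputable def ySol (a b : ℝ) (x : ℝ) : ℝ := a * y₁ x + b * y₂ x

section ySol

variable (a b : ℝ)

theorem hasDerivAt_ySol (x : ℝ) :
    HasDerivAt (ySol a b) (a * (-(5 * π / 2) * y₂ x) + b * dy₂ x) x :=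
  ((hasDerivAt_y₁ x).const_mul a).add ((hasDerivAt_y₂ x).const_mul b)

theorem deriv_ySol : deriv (ySol a b) = fun x => a * (-(5 * π / 2) * y₂ x) + b * dy₂ x :=
  funext fun x => (hasDerivAt_ySol a b x).deriv

theorem hasDerivAt_deriv_ySol (x : ℝ) :
    HasDerivAt (deriv (ySol a b))
      (a * (-(5 * π / 2) * dy₂ x) + b * (-(5 / 4 * π ^ 2) * y₂ x - 2 * π * dy₂ x)) x := by
  rw [deriv_ySol]
  exact (((hasDerivAt_y₂ x).const_mul _).const_mul a).add ((hasDerivAt_dy₂ x).const_mul b)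

theorem differentiable_ySol : Differentiable ℝ (ySol a b) :=
  fun x => (hasDerivAt_ySol a b x).differentiableAt

theorem differentiable_deriv_ySol : Differentiable ℝ (deriv (ySol a b)) :=
  fun x => (hasDerivAt_deriv_ySol a b x).differentiableAt

theorem solvesLinearODE_ySol (s : Set ℝ) :
    SolvesLinearODE (2 * π) (5 / 4 * π ^ 2) s (ySol a b) := by
  intro x _
  rw [(hasDerivAt_deriv_ySol a b x).deriv, deriv_ySol]
  simp only [ySol, y₁, y₂, dy₂]
  ring

theorem ySol_one : ySol a b 1 = a := by
  simp [ySol, y₁, y₂]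

theorem deriv_ySol_one : deriv (ySol a b) 1 = π / 2 * b := by
  simp only [deriv_ySol, y₂, dy₂, sub_self, mul_zero, zero_div, exp_zero, sin_zero, cos_zero]
  ring

theorem deriv_ySol_three : deriv (ySol a b) 3 = -(π / 2) * exp (-(2 * π)) * b := by
  rw [deriv_ySol]
  simp only [y₂, dy₂, show π * (3 - 1) / 2 = π by ring,
    show -π * (3 - 1) = -(2 * π) by ring, sin_pi, cos_pi]
  ring

end ySol

/-- For every `α, β`, the function `y = αy₁ - (2/π)e^{2π}βy₂` is a
twice differentiable solution of `y'' + 2πy' + (5/4)π²y = 0` on `[1,3]` with the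
mixed conditions `y(1) = α`, `y'(3) = β`, and any twice differentiable solution
with these conditions agrees with it on `[1,3]`. -/
theorem stmt_18 (α β : ℝ) :
    let Y : ℝ → ℝ := fun x => α * y₁ x - (2 / Real.pi) * Real.exp (2 * Real.pi) * β * y₂ x
    (Differentiable ℝ Y ∧ Differentiable ℝ (deriv Y) ∧
      (∀ x ∈ Set.Icc (1 : ℝ) 3,
        deriv (deriv Y) x + 2 * Real.pi * deriv Y x + (5 / 4) * Real.pi ^ 2 * Y x = 0) ∧
      Y 1 = α ∧ deriv Y 3 = β) ∧
    (∀ y : ℝ → ℝ, Differentiable ℝ y → Differentiable ℝ (deriv y) →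
      (∀ x ∈ Set.Icc (1 : ℝ) 3,
        deriv (deriv y) x + 2 * Real.pi * deriv y x + (5 / 4) * Real.pi ^ 2 * y x = 0) →
      y 1 = α → deriv y 3 = β →
      ∀ x ∈ Set.Icc (1 : ℝ) 3, y x = Y x) := by
  intro Y
  set K := 2 / π * exp (2 * π) * β
  have hY : Y = ySol α (-K) := funext fun x => by simp only [Y, ySol]; ring
  have hK : π / 2 * exp (-(2 * π)) * K = β := by
    have : exp (-(2 * π)) * exp (2 * π) = 1 := by rw [← exp_add]; simp
    calc π / 2 * exp (-(2 * π)) * K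
          = π / 2 * (2 / π) * (exp (-(2 * π)) * exp (2 * π)) * β := by ring
      _ = β := by rw [this]; field_simp
  rw [hY]
  refine ⟨⟨differentiable_ySol _ _, differentiable_deriv_ySol _ _, solvesLinearODE_ySol _ _ _,
    ySol_one _ _, by rw [deriv_ySol_three]; linarith⟩, ?_⟩
  intro y hy hy' hys hy1 hy3
  set c := 2 / π * deriv y 1
  obtain ⟨hval, hslope⟩ := SolvesLinearODE.eqOn_of_initial hy hy' (differentiable_ySol α c)
    (differentiable_deriv_ySol α c) hys (solvesLinearODE_ySol α c _)
    (by rw [hy1, ySol_one]) (by rw [deriv_ySol_one]; simp only [c]; field_simp)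
  have hc : c = -K := by
    have h3 := hslope (right_mem_Icc.2 (by norm_num : (1 : ℝ) ≤ 3))
    rw [hy3, deriv_ySol_three, ← hK] at h3
    have : π / 2 * exp (-(2 * π)) ≠ 0 := by positivity
    exact mul_left_cancel₀ this (by linarith)
  rwa [← hc]
end
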